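/- Fix α ∈ (0,1) and λ > 0. Let J^{B(n)} = 1/n + (1/n) ∑_{j=1}^{M^{(n)}-1} Z_j, where Z_j are i.i.d. Sibuya(α) and M^{(n)} is an independent geometric random variable with success probability p_n satisfying p_n/(1-p_n) = λ/n^α. Then for every s ≥ 0, lim_{n→∞} E[e^{-s J^{B(n)}}] = λ/(λ + s^α), the Laplace transform of the Mittag-Leffler distribution. -/

import Mathlib

/-!
By the binomial series, a Sibuya(α) variable has probability generating function
`1 - (1 - u)^α`. Conditioning on the independent geometric count `M` turns
`E[u^(1 + Z₁ + ⋯ + Z_{M-1})]` into a geometric series, with sum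
`p u / (p + (1 - p)(1 - u)^α)`. For `u = e^{-s/n}` and `p/(1 - p) = λ/n^α` this is
`u λ / (λ + (n (1 - u))^α)`, which tends to `λ / (λ + s^α)` because `n (1 - e^{-s/n}) → s`.
-/

open MeasureTheory ProbabilityTheory Filter Topology

/-- Generalized binomial coefficient `binom(x, k) = x(x-1)⋯(x-k+1)/k!` for real `x`. -/
noncomputable def gbinom (x : ℝ) (k : ℕ) : ℝ :=
  (∏ i ∈ Finset.range k, (x - i)) / (Nat.factorial k)

/-- Sibuya(α) probability mass function. -/
noncomputable def sibuya (α : ℝ) (k : ℕ) : ℝ :=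
  if k = 0 then 0 else (-1 : ℝ) ^ (k - 1) * gbinom α k

lemma gbinom_eq_choose (x : ℝ) (k : ℕ) : gbinom x k = Ring.choose x k := by
  rw [Ring.choose_eq_smul, ← Polynomial.aeval_eq_smeval, Polynomial.aeval_def,
    Polynomial.eval₂_eq_eval_map, descPochhammer_map, descPochhammer_eval_eq_prod_range,
    gbinom, smul_eq_mul, inv_mul_eq_div]

lemma hasSum_gbinom_mul_pow (a : ℝ) {x : ℝ} (hx : |x| < 1) :
    HasSum (fun k => gbinom a k * x ^ k) ((1 + x) ^ a) := by
  have h := Real.one_add_rpow_hasFPowerSeriesOnBall_zero (a := a) |>.hasSum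
    (y := x) (by simpa [enorm_eq_nnnorm, ← NNReal.coe_lt_coe] using hx)
  simpa [binomialSeries, FormalMultilinearSeries.ofScalars_apply_eq, gbinom_eq_choose,
    mul_comm] using h

lemma hasSum_sibuya_mul_pow (α : ℝ) {u : ℝ} (hu : |u| < 1) :
    HasSum (fun k => sibuya α k * u ^ k) (1 - (1 - u) ^ α) := by
  have h := (hasSum_ite_eq 0 (1 : ℝ)).sub (hasSum_gbinom_mul_pow α (x := -u) (by rwa [abs_neg]))
  rw [← sub_eq_add_neg] at h
  refine h.congr_fun fun k => ?_
  rcases k with _ | k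
  · simp [sibuya, gbinom]
  · simp [sibuya, pow_succ, neg_pow u]
    ring

lemma hasSum_geometric_law_mul_pow {P : ℕ → ℝ} {p q : ℝ} (hP0 : P 0 = 0)
    (hP : ∀ k, 1 ≤ k → P k = p * (1 - p) ^ (k - 1)) (hq : ‖(1 - p) * q‖ < 1) :
    HasSum (fun k => P k * q ^ (k - 1)) (p / (1 - (1 - p) * q)) := by
  rw [← hasSum_nat_add_iff' 1]
  simp only [Finset.range_one, Finset.sum_singleton, hP0, zero_mul, sub_zero,
    hP _ (Nat.le_add_left 1 _), Nat.add_sub_cancel]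
  simpa only [mul_assoc, ← mul_pow, div_eq_mul_inv] using
    (hasSum_geometric_of_norm_lt_one hq).mul_left p

section

variable {Ω : Type*} [MeasurableSpace Ω] {μ : Measure Ω}

lemma integral_comp_eq_tsum_measureReal [IsFiniteMeasure μ] {X : Ω → ℕ} (hX : Measurable X)
    {g : ℕ → ℝ} {C : ℝ} (hg : ∀ k, ‖g k‖ ≤ C) :
    ∫ ω, g (X ω) ∂μ = ∑' k, μ.real {ω | X ω = k} * g k := by
  have hint : Integrable g (μ.map X) :=
    (integrable_const C).mono' measurable_from_top.aestronglyMeasurable (.of_forall hg)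
  rw [← integral_map hX.aemeasurable measurable_from_top.aestronglyMeasurable,
    integral_countable hint]
  refine tsum_congr fun k => ?_
  rw [smul_eq_mul, map_measureReal_apply hX (measurableSet_singleton k)]
  rfl

lemma integral_comp_eq_tsum_of_indepFun [IsProbabilityMeasure μ] {β : Type*} [MeasurableSpace β]
    {X : Ω → ℕ} {Y : Ω → β} (hX : Measurable X) (hY : Measurable Y) (hXY : IndepFun X Y μ)
    {F : ℕ → β → ℝ} (hF : ∀ m, Measurable (F m)) {C : ℝ} (hC : ∀ m y, ‖F m y‖ ≤ C) :
    ∫ ω, F (X ω) (Y ω) ∂μ = ∑' m, μ.real {ω | X ω = m} * ∫ ω, F m (Y ω) ∂μ := by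
  have hFm : Measurable (Function.uncurry F) := measurable_from_prod_countable_right hF
  have hint : Integrable (Function.uncurry F) ((μ.map X).prod (μ.map Y)) :=
    (integrable_const C).mono' hFm.aestronglyMeasurable (.of_forall fun q => hC q.1 q.2)
  calc ∫ ω, F (X ω) (Y ω) ∂μ
      = ∫ q, Function.uncurry F q ∂((μ.map X).prod (μ.map Y)) := by
        rw [← (indepFun_iff_map_prod_eq_prod_map_map hX.aemeasurable hY.aemeasurable).mp hXY,
          integral_map (hX.prodMk hY).aemeasurable hFm.aestronglyMeasurable]
        rfl
    _ = ∫ ω, (fun m => ∫ ω', F m (Y ω') ∂μ) (X ω) ∂μ := by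
        rw [integral_prod _ hint,
          integral_map hX.aemeasurable measurable_from_top.aestronglyMeasurable]
        simp only [Function.uncurry_apply_pair]
        congr 1
        funext ω
        rw [integral_map hY.aemeasurable (hF _).aestronglyMeasurable]
    _ = _ := integral_comp_eq_tsum_measureReal hX (g := fun m => ∫ ω', F m (Y ω') ∂μ) fun m =>
        (norm_integral_le_of_norm_le_const (μ := μ) (.of_forall fun ω => hC m (Y ω))).trans_eq
          (by rw [probReal_univ, mul_one])

lemma ProbabilityTheory.iIndepFun.integral_prod_range_comp {β : Type*} [MeasurableSpace β]
    {Z : ℕ → Ω → β} (hZ : iIndepFun Z μ) (hZm : ∀ i, Measurable (Z i)) {g : β → ℝ}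
    (hg : Measurable g) (r : ℕ) :
    ∫ ω, ∏ k ∈ Finset.range r, g (Z k ω) ∂μ = ∏ k ∈ Finset.range r, ∫ ω, g (Z k ω) ∂μ := by
  have h := (hZ.precomp (Fin.val_injective (n := r))).integral_fun_prod_comp (f := fun _ => g)
    (fun i => (hZm i).aemeasurable) (fun _ => hg.aestronglyMeasurable)
  have hfin : ∀ ω, ∏ i : Fin r, g (Z i ω) = ∏ k ∈ Finset.range r, g (Z k ω) :=
    fun ω => Fin.prod_univ_eq_prod_range (fun k => g (Z k ω)) r
  simpa only [hfin, Fin.prod_univ_eq_prod_range (fun k => ∫ ω, g (Z k ω) ∂μ)] using h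

lemma integral_pow_one_add_sum_of_geometric [IsProbabilityMeasure μ]
    {Z : ℕ → Ω → ℕ} (hZm : ∀ i, Measurable (Z i)) (hZindep : iIndepFun Z μ)
    {p : ℝ} {M : Ω → ℕ} (hM : Measurable M)
    (hMlaw : ∀ k, 1 ≤ k → μ.real {ω | M ω = k} = p * (1 - p) ^ (k - 1))
    (hM0 : μ.real {ω | M ω = 0} = 0) (hMZ : IndepFun M (fun ω i => Z i ω) μ)
    {u G : ℝ} (hu : |u| ≤ 1) (hZpgf : ∀ i, ∫ ω, u ^ Z i ω ∂μ = G) (hG : ‖(1 - p) * G‖ < 1) :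
    ∫ ω, u ^ (1 + ∑ k ∈ Finset.range (M ω - 1), Z k ω) ∂μ = u * (p / (1 - (1 - p) * G)) := by
  have hprod (r : ℕ) : ∫ ω, ∏ k ∈ Finset.range r, u ^ Z k ω ∂μ = G ^ r := by
    rw [hZindep.integral_prod_range_comp hZm measurable_from_top,
      Finset.prod_congr rfl fun i _ => hZpgf i, Finset.prod_const, Finset.card_range]
  calc ∫ ω, u ^ (1 + ∑ k ∈ Finset.range (M ω - 1), Z k ω) ∂μ
      = ∑' m, μ.real {ω | M ω = m} * ∫ ω, u ^ (1 + ∑ k ∈ Finset.range (m - 1), Z k ω) ∂μ :=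
        integral_comp_eq_tsum_of_indepFun hM (measurable_pi_lambda _ hZm) hMZ
          (F := fun m z => u ^ (1 + ∑ k ∈ Finset.range (m - 1), z k)) (C := 1)
          (fun m => measurable_from_top.comp (measurable_const.add
            (Finset.measurable_sum _ fun k _ => measurable_pi_apply k)))
          (fun m z => by rw [norm_pow, Real.norm_eq_abs]; exact pow_le_one₀ (abs_nonneg u) hu)
    _ = u * ∑' m, μ.real {ω | M ω = m} * G ^ (m - 1) := by
        rw [← tsum_mul_left]
        refine tsum_congr fun m => ?_
        simp only [pow_add, pow_one, ← Finset.prod_pow_eq_pow_sum, integral_const_mul, hprod]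
        ring
    _ = u * (p / (1 - (1 - p) * G)) := by
        rw [(hasSum_geometric_law_mul_pow hM0 hMlaw hG).tsum_eq]

lemma integral_pow_of_sibuya [IsFiniteMeasure μ] {α : ℝ} {X : Ω → ℕ} (hX : Measurable X)
    (hlaw : ∀ k, μ.real {ω | X ω = k} = sibuya α k) {u : ℝ} (hu : |u| < 1) :
    ∫ ω, u ^ X ω ∂μ = 1 - (1 - u) ^ α := by
  rw [integral_comp_eq_tsum_measureReal hX (C := 1) fun k => by
      rw [norm_pow, Real.norm_eq_abs]; exact pow_le_one₀ (abs_nonneg u) hu.le]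
  simp only [hlaw]
  exact (hasSum_sibuya_mul_pow α hu).tsum_eq

lemma integral_pow_one_add_sum_sibuya [IsProbabilityMeasure μ] {α : ℝ} (hα : 0 ≤ α)
    {Z : ℕ → Ω → ℕ} (hZm : ∀ i, Measurable (Z i)) (hZindep : iIndepFun Z μ)
    (hZlaw : ∀ i k, μ.real {ω | Z i ω = k} = sibuya α k)
    {p : ℝ} (hp : p ∈ Set.Ioo (0 : ℝ) 1) {M : Ω → ℕ} (hM : Measurable M)
    (hMlaw : ∀ k, 1 ≤ k → μ.real {ω | M ω = k} = p * (1 - p) ^ (k - 1))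
    (hM0 : μ.real {ω | M ω = 0} = 0) (hMZ : IndepFun M (fun ω i => Z i ω) μ)
    {u : ℝ} (hu0 : 0 ≤ u) (hu1 : u < 1) :
    ∫ ω, u ^ (1 + ∑ k ∈ Finset.range (M ω - 1), Z k ω) ∂μ
      = p * u / (p + (1 - p) * (1 - u) ^ α) := by
  have hu : |u| < 1 := by rwa [abs_of_nonneg hu0]
  have hG : ‖(1 - p) * (1 - (1 - u) ^ α)‖ < 1 := by
    have h1 : 0 < (1 - u) ^ α := Real.rpow_pos_of_pos (by linarith) α
    have h2 : (1 - u) ^ α ≤ 1 := Real.rpow_le_one (by linarith) (by linarith) hα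
    rw [Real.norm_eq_abs, abs_lt]
    constructor <;> nlinarith [hp.1, hp.2]
  rw [integral_pow_one_add_sum_of_geometric hZm hZindep hM hMlaw hM0 hMZ hu.le
    (fun i => integral_pow_of_sibuya (hZm i) (hZlaw i) hu) hG, mul_div_assoc', mul_comm u]
  congr 1
  ring

end

lemma tendsto_nat_mul_one_sub_exp_neg_div {s : ℝ} (hs : 0 < s) :
    Tendsto (fun n : ℕ => n * (1 - Real.exp (-(s / n)))) atTop (𝓝 s) := by
  have hslope : Tendsto (fun t => t⁻¹ * (1 - Real.exp (-t))) (𝓝[>] 0) (𝓝 1) := by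
    have h := ((Real.hasDerivAt_exp _).comp 0 (hasDerivAt_neg (0 : ℝ))).const_sub 1
    simpa [Function.comp_def] using h.tendsto_slope_zero_right
  have hsn : Tendsto (fun n : ℕ => s / n) atTop (𝓝[>] 0) :=
    tendsto_nhdsWithin_iff.2 ⟨tendsto_const_div_atTop_nhds_zero_nat s,
      eventually_atTop.2 ⟨1, fun n hn => div_pos hs (by exact_mod_cast hn)⟩⟩
  have h := (hslope.comp hsn).const_mul s
  rw [mul_one] at h
  refine h.congr' ?_
  filter_upwards [eventually_ge_atTop 1] with n hn
  simp only [Function.comp_apply, inv_div]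
  field_simp

lemma mul_div_add_one_sub_mul_rpow_of_odds_eq {α lam p c u v : ℝ} (hp : p ∈ Set.Ioo (0 : ℝ) 1)
    (hc : 0 < c) (hv : 0 ≤ v) (hpc : p / (1 - p) = lam / c ^ α) :
    p * u / (p + (1 - p) * v ^ α) = u * lam / (lam + (c * v) ^ α) := by
  have hcα : 0 < c ^ α := Real.rpow_pos_of_pos hc α
  rw [div_eq_div_iff (by linarith [hp.2]) hcα.ne'] at hpc
  have hvα := Real.rpow_nonneg hv α
  have hlam : 0 < lam := by nlinarith [hp.1, hp.2]
  rw [Real.mul_rpow hc.le hv, div_eq_div_iff (by nlinarith [hp.1]) (by positivity)]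
  linear_combination u * v ^ α * hpc

/-- Fix `α ∈ (0,1)` and `λ > 0`. Let
`J^{B(n)} = 1/n + (1/n) ∑_{j=1}^{M n - 1} Z j`, where the `Z j` are i.i.d. Sibuya(α) and
`M n` is an independent geometric random variable with success probability `p n` satisfying
`p n / (1 - p n) = λ / n^α`. Then for every `s ≥ 0`,
`lim_{n→∞} E[exp (-s J^{B(n)})] = λ/(λ + s^α)`,
the Laplace transform of the Mittag-Leffler distribution. -/
theorem fractional_bernoulli_laplace_limit
    {Ω : Type*} [MeasurableSpace Ω] (μ : Measure Ω) [IsProbabilityMeasure μ]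
    (α : ℝ) (hα : α ∈ Set.Ioo (0 : ℝ) 1) (lam : ℝ) (hlam : 0 < lam)
    (Z : ℕ → Ω → ℕ) (hZmeas : ∀ i, Measurable (Z i))
    (hZindep : iIndepFun Z μ)
    (hZlaw : ∀ i k, (μ {ω | Z i ω = k}).toReal = sibuya α k)
    (p : ℕ → ℝ) (hp : ∀ n : ℕ, 1 ≤ n → p n ∈ Set.Ioo (0 : ℝ) 1)
    (hpn : ∀ n : ℕ, 1 ≤ n → p n / (1 - p n) = lam / (n : ℝ) ^ α)
    (M : ℕ → Ω → ℕ) (hMmeas : ∀ n, Measurable (M n))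
    (hMlaw : ∀ n k : ℕ, 1 ≤ n → 1 ≤ k →
      (μ {ω | M n ω = k}).toReal = p n * (1 - p n) ^ (k - 1))
    (hM0 : ∀ n : ℕ, 1 ≤ n → (μ {ω | M n ω = 0}).toReal = 0)
    (hMZ : ∀ n, IndepFun (M n) (fun ω => fun i => Z i ω) μ)
    (s : ℝ) (hs : 0 ≤ s) :
    Tendsto (fun n : ℕ =>
        ∫ ω, Real.exp (-s * ((1 + ∑ k ∈ Finset.range (M n ω - 1), Z k ω : ℕ) : ℝ) / n) ∂μ)
      atTop (nhds (lam / (lam + s ^ α))) := by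
  rcases hs.eq_or_lt with rfl | hs
  · simp [Real.zero_rpow hα.1.ne', hlam.ne']
  have hlaplace : ∀ n : ℕ, 1 ≤ n →
      Real.exp (-(s / n)) * lam / (lam + (n * (1 - Real.exp (-(s / n)))) ^ α) =
      ∫ ω, Real.exp (-s * ((1 + ∑ k ∈ Finset.range (M n ω - 1), Z k ω : ℕ) : ℝ) / n) ∂μ := by
    intro n hn
    have hn0 : (0 : ℝ) < n := by exact_mod_cast hn
    have hexp (N : ℕ) : Real.exp (-s * (N : ℝ) / n) = Real.exp (-(s / n)) ^ N := by
      rw [← Real.exp_nat_mul]; ring_nf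
    simp only [hexp]
    rw [integral_pow_one_add_sum_sibuya hα.1.le hZmeas hZindep hZlaw (hp n hn) (hMmeas n)
      (hMlaw n · hn) (hM0 n hn) (hMZ n) (Real.exp_pos _).le
      (Real.exp_lt_one_iff.2 (by simpa using div_pos hs hn0)),
      mul_div_add_one_sub_mul_rpow_of_odds_eq (hp n hn) hn0
        (by simp [Real.exp_le_one_iff]; positivity) (hpn n hn)]
  refine Tendsto.congr' (eventually_atTop.2 ⟨1, hlaplace⟩) ?_
  have hexp : Tendsto (fun n : ℕ => Real.exp (-(s / n))) atTop (𝓝 1) := by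
    refine Real.tendsto_exp_nhds_zero_nhds_one.comp ?_
    simpa using (tendsto_const_div_atTop_nhds_zero_nat s).neg
  have h := (hexp.mul_const lam).div (tendsto_const_nhds.add
    ((tendsto_nat_mul_one_sub_exp_neg_div hs).rpow_const (p := α) (Or.inl hs.ne')))
    (by positivity)
  rwa [one_mul] at h
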